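/- arXiv:0802.2197 — 6 statements merged into one kernel-verified Lean document; each statement's English description precedes it below -/
import Mathlib

section
/- For every integer n ≥ 1, the sum over all integers j in n + 2ℤ with j ≠ ±n of 1/|n² - j²| is at most (2 log(6n))/n. -/
/-!
Writing `j = n + 2k` gives `|n² - j²| = 4 |k (k + n)|` with `k ≠ 0, -n`. Split the sum over
`k ∈ ℤ` into `k > 0`, `-n < k < 0` and `k < -n`; the reflection `k ↦ -n - k` exchanges the two
outer ranges. By `n / (k (k + n)) = 1 / k - 1 / (k + n)` each outer sum telescopes to at most
`H_n / n`, and the middle one equals `2 H_{n-1} / n`. So the whole sum is at most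
`H_n / n ≤ (1 + log n) / n`.
-/

open Finset

lemma harmonic_mono : Monotone harmonic :=
  monotone_nat_of_le_succ fun n => by
    rw [harmonic_succ]
    exact le_add_of_nonneg_right (by positivity)

lemma cast_harmonic_eq_sum (n : ℕ) : (harmonic n : ℝ) = ∑ m ∈ range n, 1 / ((m : ℝ) + 1) := by
  simp [harmonic]

lemma mul_sum_range_one_div_mul_add (n M : ℕ) :
    n * ∑ m ∈ range M, 1 / ((m + 1 : ℝ) * (m + 1 + n)) =
      harmonic n + harmonic M - harmonic (M + n) := by
  induction M with
  | zero => simp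
  | succ M ih =>
    rw [sum_range_succ, mul_add, ih, Nat.add_right_comm, harmonic_succ, harmonic_succ]
    push_cast
    field_simp
    ring

section
variable {n : ℕ}

lemma sum_range_one_div_mul_add_le (hn : 0 < n) (M : ℕ) :
    ∑ m ∈ range M, 1 / ((m + 1 : ℝ) * (m + 1 + n)) ≤ harmonic n / n := by
  rw [le_div_iff₀' (by positivity), mul_sum_range_one_div_mul_add]
  have : (harmonic M : ℝ) ≤ harmonic (M + n) := by exact_mod_cast harmonic_mono (by omega)
  linarith

lemma summable_one_div_mul_add (hn : 0 < n) :
    Summable fun m : ℕ => 1 / ((m + 1 : ℝ) * (m + 1 + n)) :=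
  summable_of_sum_range_le (fun _ => by positivity) (sum_range_one_div_mul_add_le hn)

lemma tsum_one_div_mul_add_le (hn : 0 < n) :
    ∑' m : ℕ, 1 / ((m + 1 : ℝ) * (m + 1 + n)) ≤ harmonic n / n :=
  Real.tsum_le_of_sum_range_le (fun _ => by positivity) (sum_range_one_div_mul_add_le hn)

end

lemma sum_range_one_div_sub (p : ℕ) : ∑ m ∈ range p, 1 / ((p : ℝ) - m) = harmonic p := by
  induction p with
  | zero => simp
  | succ p ih =>
    rw [sum_range_succ', harmonic_succ]
    push_cast
    rw [← ih]
    simp only [add_sub_add_right_eq_sub, sub_zero, one_div]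

lemma sum_range_one_div_mul_sub (p : ℕ) :
    ∑ m ∈ range p, 1 / ((m + 1 : ℝ) * (p - m)) = 2 * harmonic p / (p + 1) := by
  have h : ∀ m ∈ range p,
      1 / ((m + 1 : ℝ) * (p - m)) = (1 / (m + 1) + 1 / (p - m)) / (p + 1) := by
    intro m hm
    have : (p : ℝ) - m ≠ 0 := sub_ne_zero.2 (by exact_mod_cast (mem_range.1 hm).ne')
    field_simp
    ring
  rw [sum_congr rfl h, ← sum_div, sum_add_distrib, sum_range_one_div_sub, ← cast_harmonic_eq_sum]
  ring

lemma sum_range_one_div_abs_mul_sub_le (n : ℕ) :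
    ∑ m ∈ range n, 1 / |((m : ℝ) + 1) * (n - (m + 1))| ≤ 2 * harmonic n / n := by
  cases n with
  | zero => simp
  | succ p =>
    have h : ∀ m ∈ range p, 1 / |((m : ℝ) + 1) * ((p + 1 : ℕ) - (m + 1))| =
        1 / ((m + 1 : ℝ) * (p - m)) := by
      intro m hm
      have : (m : ℝ) < p := by exact_mod_cast mem_range.1 hm
      rw [abs_of_pos (by push_cast; nlinarith)]
      push_cast
      ring
    rw [sum_range_succ, sum_congr rfl h, sum_range_one_div_mul_sub]
    have : (harmonic p : ℝ) ≤ harmonic (p + 1) := by exact_mod_cast harmonic_mono p.le_succ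
    push_cast
    -- the last term is `1 / |(p + 1) * 0| = 0`
    simp only [sub_self, mul_zero, abs_zero, div_zero, add_zero]
    gcongr

lemma tsum_int_one_div_abs_mul_add_le {n : ℕ} (hn : 0 < n) :
    ∑' k : ℤ, 1 / |(k : ℝ) * (k + n)| ≤ 4 * harmonic n / n := by
  set g : ℤ → ℝ := fun k => 1 / |(k : ℝ) * (k + n)| with hg
  set a : ℕ → ℝ := fun m => 1 / ((m + 1 : ℝ) * (m + 1 + n)) with ha
  have hpos : ∀ m : ℕ, g ↑(m + 1) = a m := fun m => by
    simp only [hg, ha]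
    push_cast
    rw [abs_of_pos (by positivity)]
  -- the reflection `k ↦ -n - k` maps the left tail onto the right one
  have hneg : ∀ m : ℕ, g (-(↑(m + n) + 1)) = a m := fun m => by
    simp only [hg, ha]
    rw [← abs_of_pos (show (0 : ℝ) < (m + 1) * (m + 1 + n) by positivity)]
    push_cast
    congr 2
    ring
  have hmid : ∀ m : ℕ, g (-(m + 1)) = 1 / |((m : ℝ) + 1) * (n - (m + 1))| := fun m => by
    simp only [hg]
    push_cast
    rw [neg_mul, abs_neg, neg_add_eq_sub]
  have hs₁ : Summable fun m : ℕ => g m :=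
    (summable_nat_add_iff 1).1 ((summable_one_div_mul_add hn).congr fun m => (hpos m).symm)
  have hs₂ : Summable fun m : ℕ => g (-(m + 1)) :=
    (summable_nat_add_iff n).1 ((summable_one_div_mul_add hn).congr fun m => (hneg m).symm)
  rw [tsum_of_nat_of_neg_add_one hs₁ hs₂, hs₁.tsum_eq_zero_add, ← hs₂.sum_add_tsum_nat_add n]
  have h₀ : g 0 = 0 := by simp [hg]
  simp only [Nat.cast_zero, h₀, zero_add, hpos, hneg, hmid]
  have hmid_le := sum_range_one_div_abs_mul_sub_le n
  have htail_le : ∑' m, a m ≤ harmonic n / n := tsum_one_div_mul_add_le hn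
  calc _ ≤ (harmonic n / n + (2 * harmonic n / n + harmonic n / n) : ℝ) := by gcongr
    _ = _ := by ring

lemma tsum_subtype_parity_eq {α : Type*} [AddCommMonoid α] [TopologicalSpace α] (n : ℤ)
    (f : ℤ → α) (hf₁ : f n = 0) (hf₂ : f (-n) = 0) :
    ∑' j : {j : ℤ // j % 2 = n % 2 ∧ j ≠ n ∧ j ≠ -n}, f j = ∑' k : ℤ, f (n + 2 * k) := by
  set e : {j : ℤ // j % 2 = n % 2 ∧ j ≠ n ∧ j ≠ -n} → ℤ := fun j => (j.1 - n) / 2 with he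
  have hinj : Function.Injective e := by
    intro a b hab
    have ha := a.2.1
    have hb := b.2.1
    simp only [he] at hab
    exact Subtype.ext (by omega)
  have hsupp : (Function.support fun k => f (n + 2 * k)) ⊆ Set.range e := by
    intro k hk
    have h₁ : n + 2 * k ≠ n := fun h => hk (by simpa [h] using hf₁)
    have h₂ : n + 2 * k ≠ -n := fun h => hk (by simpa [h] using hf₂)
    exact ⟨⟨n + 2 * k, by omega, h₁, h₂⟩, by simp only [he]; omega⟩
  rw [← hinj.tsum_eq hsupp]
  refine tsum_congr ?_
  rintro ⟨j, hj, -⟩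
  simp only [he]
  congr 1
  omega

lemma one_add_log_le_two_mul_log_six_mul {x : ℝ} (hx : 1 ≤ x) :
    1 + Real.log x ≤ 2 * Real.log (6 * x) := by
  have h₆ : 1 - 6⁻¹ ≤ Real.log 6 := Real.one_sub_inv_le_log_of_pos (by norm_num)
  have hx₀ : 0 ≤ Real.log x := Real.log_nonneg hx
  rw [Real.log_mul (by norm_num) (by positivity)]
  linarith

/-- For every integer `n ≥ 1`, the sum over all integers `j ∈ n + 2ℤ` with `j ≠ ±n`
of `1/|n² - j²|` is at most `(2 log (6n))/n`. -/
theorem stmt0 (n : ℕ) (hn : 1 ≤ n) :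
    ∑' j : {j : ℤ // j % 2 = (n : ℤ) % 2 ∧ j ≠ (n : ℤ) ∧ j ≠ -(n : ℤ)},
      (1 : ℝ) / |(n : ℝ) ^ 2 - (j.1 : ℝ) ^ 2| ≤ 2 * Real.log (6 * n) / n := by
  have hterm : ∀ k : ℤ, 1 / |(n : ℝ) ^ 2 - ((n + 2 * k : ℤ) : ℝ) ^ 2| =
      1 / 4 * (1 / |(k : ℝ) * (k + n)|) := fun k => by
    push_cast
    rw [show (n : ℝ) ^ 2 - (n + 2 * k) ^ 2 = -4 * (k * (k + n)) by ring, abs_mul]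
    norm_num
    ring
  rw [tsum_subtype_parity_eq (n : ℤ) (fun j => 1 / |(n : ℝ) ^ 2 - (j : ℝ) ^ 2|) (by simp)
    (by simp), tsum_congr hterm, tsum_mul_left]
  calc 1 / 4 * ∑' k : ℤ, 1 / |(k : ℝ) * (k + n)| ≤ 1 / 4 * (4 * harmonic n / n) := by
        gcongr; exact tsum_int_one_div_abs_mul_add_le hn
    _ = harmonic n / n := by ring
    _ ≤ (1 + Real.log n) / n := by gcongr; exact harmonic_le_one_add_log n
    _ ≤ 2 * Real.log (6 * n) / n := by
        gcongr; exact one_add_log_le_two_mul_log_six_mul (by exact_mod_cast hn)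
end

section
/- Let r = (r(m))_{m ∈ 2ℤ} be a nonnegative square-summable sequence with ℓ²-norm ‖r‖, and for n ∈ ℕ let E_n(r) = (∑_{|m| ≥ n} r(m)²)^{1/2} denote the tail. Then for all n ≥ 4 and every m ∈ n + 2ℤ, the sum σ₁(n,1;m) = ∑_{j ≠ n, j ∈ n+2ℤ} r(m+j)/|n-j| satisfies σ₁(n,1;m) ≤ ‖r‖; and if additionally |m - n| ≤ n/2, then σ₁(n,1;m) ≤ E_n(r) + 2‖r‖/√n. -/
/-!
Write `σ₁ = ∑ f g` with `f j = r (m + j)` and `g j = 1 / |n - j|`. Since `n - j = 2k` with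
`k ≠ 0`, `∑ g² ≤ ∑_{k ≠ 0} 1/(4k²) ≤ 1`, and Cauchy–Schwarz gives the first bound. For the second,
split at `|j - n| = n/2`: on the near part `m + j ≥ n`, so `f` only sees the tail of `r`; on the
far part `|k| > n/4`, so `∑ g² ≤ 4/n`. Everything is proved for finite partial sums, which bound
the nonnegative series.
-/

open Finset

lemma sum_inv_sq_le_of_lt_natAbs (K : ℕ) (s : Finset ℤ) (hs : ∀ k ∈ s, K < k.natAbs) :
    ∑ k ∈ s, ((k : ℝ) ^ 2)⁻¹ ≤ 4 / (K + 1) := by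
  classical
  have hfiber : ∀ i : ℕ, #{k ∈ s | k.natAbs = i} ≤ 2 := fun i =>
    (card_le_card (t := {(i : ℤ), -(i : ℤ)}) fun k hk => by
      simp only [mem_filter, mem_insert, mem_singleton] at hk ⊢; omega).trans card_le_two
  have hsub : s.image Int.natAbs ⊆ Ioo K (s.sup Int.natAbs + 1) := fun i hi => by
    obtain ⟨k, hk, rfl⟩ := mem_image.1 hi
    exact mem_Ioo.2 ⟨hs k hk, Nat.lt_succ_of_le (le_sup hk)⟩
  calc ∑ k ∈ s, ((k : ℝ) ^ 2)⁻¹ = ∑ k ∈ s, (((k.natAbs : ℕ) : ℝ) ^ 2)⁻¹ := by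
        simp only [Nat.cast_natAbs, Int.cast_abs, sq_abs]
    _ = ∑ i ∈ s.image Int.natAbs, #{k ∈ s | k.natAbs = i} • ((i : ℝ) ^ 2)⁻¹ :=
        sum_comp (fun i : ℕ => ((i : ℝ) ^ 2)⁻¹) Int.natAbs
    _ ≤ ∑ i ∈ s.image Int.natAbs, 2 * ((i : ℝ) ^ 2)⁻¹ := by
        gcongr with i
        rw [nsmul_eq_mul]
        gcongr
        exact_mod_cast hfiber i
    _ ≤ 2 * ∑ i ∈ Ioo K (s.sup Int.natAbs + 1), ((i : ℝ) ^ 2)⁻¹ := by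
        rw [← mul_sum]
        gcongr
    _ ≤ 2 * (2 / (K + 1)) := by gcongr; exact sum_Ioo_inv_sq_le _ _
    _ = 4 / (K + 1) := by ring

lemma sum_abs_sub_inv_sq_le (n : ℤ) (K : ℕ) (s : Finset ℤ)
    (hs : ∀ j ∈ s, j % 2 = n % 2 ∧ 2 * K < (n - j).natAbs) :
    ∑ j ∈ s, |(n : ℝ) - j|⁻¹ ^ 2 ≤ 1 / (K + 1) := by
  classical
  have hhalf : ∀ j ∈ s, n - j = 2 * ((n - j) / 2) := fun j hj => by
    have := (hs j hj).1; omega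
  have hinj : Set.InjOn (fun j => (n - j) / 2) s := fun a ha b hb hab => by
    have := hhalf a ha; have := hhalf b hb; simp only at hab; omega
  calc ∑ j ∈ s, |(n : ℝ) - j|⁻¹ ^ 2 = ∑ j ∈ s, 4⁻¹ * ((((n - j) / 2 : ℤ) : ℝ) ^ 2)⁻¹ := by
        refine sum_congr rfl fun j hj => ?_
        have h : (n : ℝ) - j = 2 * (((n - j) / 2 : ℤ) : ℝ) := by exact_mod_cast hhalf j hj
        rw [inv_pow, sq_abs, h]
        ring
    _ = 4⁻¹ * ∑ k ∈ s.image fun j => (n - j) / 2, ((k : ℝ) ^ 2)⁻¹ := by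
        rw [sum_image hinj, mul_sum]
    _ ≤ 4⁻¹ * (4 / (K + 1)) := by
        gcongr
        refine sum_inv_sq_le_of_lt_natAbs K _ fun k hk => ?_
        obtain ⟨j, hj, rfl⟩ := mem_image.1 hk
        have := hhalf j hj; have := (hs j hj).2; omega
    _ = 1 / (K + 1) := by field_simp

lemma sum_mul_le_of_sum_sq_le {ι : Type*} (s : Finset ι) (f g : ι → ℝ) {A B : ℝ}
    (hA : ∑ i ∈ s, f i ^ 2 ≤ A) (hB : ∑ i ∈ s, g i ^ 2 ≤ B) :
    ∑ i ∈ s, f i * g i ≤ √A * √B :=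
  (Real.sum_mul_le_sqrt_mul_sqrt s f g).trans (by gcongr)

lemma sum_le_tsum_subtype {α : Type*} {f : α → ℝ} (hf : Summable f) (hf₀ : ∀ a, 0 ≤ f a)
    {p : α → Prop} (s : Finset α) (hs : ∀ a ∈ s, p a) :
    ∑ a ∈ s, f a ≤ ∑' a : {a // p a}, f a := by
  classical
  rw [← sum_subtype_of_mem f hs]
  exact (hf.subtype _).sum_le_tsum _ fun _ _ => hf₀ _

lemma tsum_subtype_le_of_sum_le {α : Type*} {f : α → ℝ} (hf₀ : ∀ a, 0 ≤ f a) {p : α → Prop}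
    {c : ℝ} (h : ∀ s : Finset α, (∀ a ∈ s, p a) → ∑ a ∈ s, f a ≤ c) :
    ∑' a : {a // p a}, f a ≤ c :=
  Real.tsum_le_of_sum_le (fun a => hf₀ a) fun u => by
    simpa using h (u.map (Function.Embedding.subtype p)) (by simp +contextual)

lemma sum_sq_add_le_tsum {r : ℤ → ℝ} (hsum : Summable fun k => r k ^ 2) (m : ℤ)
    (s : Finset ℤ) :
    ∑ j ∈ s, r (m + j) ^ 2 ≤ ∑' k, r k ^ 2 := by
  simpa [sum_map] using hsum.sum_le_tsum (s.map (addLeftEmbedding m)) fun _ _ => sq_nonneg _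

lemma sum_div_abs_sub_le {r : ℤ → ℝ} (hsum : Summable fun k => r k ^ 2) (n : ℕ) (m : ℤ)
    (s : Finset ℤ) (hs : ∀ j ∈ s, j % 2 = (n : ℤ) % 2 ∧ j ≠ n) :
    ∑ j ∈ s, r (m + j) / |(n : ℝ) - j| ≤ √(∑' k, r k ^ 2) := by
  have hweight := sum_abs_sub_inv_sq_le n 0 s fun j hj => by have := hs j hj; omega
  have := sum_mul_le_of_sum_sq_le s (fun j => r (m + j)) (fun j => |(n : ℝ) - j|⁻¹)
    (sum_sq_add_le_tsum hsum m s) (by simpa using hweight)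
  simpa [div_eq_mul_inv] using this

lemma sum_div_abs_sub_le_sqrt_tail_add {r : ℤ → ℝ} (hsum : Summable fun k => r k ^ 2)
    (n : ℕ) (hn : 0 < n) (m : ℤ) (hmn : 2 * (m - n).natAbs ≤ n)
    (s : Finset ℤ) (hs : ∀ j ∈ s, j % 2 = (n : ℤ) % 2 ∧ j ≠ n) :
    ∑ j ∈ s, r (m + j) / |(n : ℝ) - j| ≤
      √(∑' k : {k : ℤ // (n : ℤ) ≤ |k|}, r k ^ 2) + 2 * √(∑' k, r k ^ 2) / √n := by
  classical
  set near := s.filter fun j : ℤ => 2 * (j - n).natAbs ≤ n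
  set far := s.filter fun j : ℤ => ¬ 2 * (j - n).natAbs ≤ n
  have hnear : ∑ j ∈ near, r (m + j) * |(n : ℝ) - j|⁻¹ ≤
      √(∑' k : {k : ℤ // (n : ℤ) ≤ |k|}, r k ^ 2) * √1 := by
    refine sum_mul_le_of_sum_sq_le _ _ _ ?_ ?_
    · have hmem : ∀ k ∈ near.map (addLeftEmbedding m), (n : ℤ) ≤ |k| := by
        intro k hk
        obtain ⟨j, hj, rfl⟩ := mem_map.1 hk
        have := (mem_filter.1 hj).2
        exact (show (n : ℤ) ≤ m + j by omega).trans (le_abs_self _)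
      simpa [sum_map] using sum_le_tsum_subtype hsum (fun _ => sq_nonneg _) _ hmem
    · simpa using sum_abs_sub_inv_sq_le n 0 near fun j hj => by
        have := hs j (mem_filter.1 hj).1; omega
  have hfar : ∑ j ∈ far, r (m + j) * |(n : ℝ) - j|⁻¹ ≤ √(∑' k, r k ^ 2) * √(4 / n) := by
    refine sum_mul_le_of_sum_sq_le _ _ _ (sum_sq_add_le_tsum hsum m _) ?_
    refine (sum_abs_sub_inv_sq_le n (n / 4) far fun j hj => ?_).trans ?_
    · have := mem_filter.1 hj; have := hs j this.1; omega
    · rw [div_le_div_iff₀ (by positivity) (by positivity)]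
      have : (n : ℝ) ≤ 4 * ((n / 4 : ℕ) + 1) := by
        exact_mod_cast (by omega : n ≤ 4 * (n / 4 + 1))
      linarith
  have hsqrt : √(4 / n : ℝ) = 2 / √n := by
    rw [Real.sqrt_div' _ (Nat.cast_nonneg n), show (4 : ℝ) = 2 ^ 2 by norm_num,
      Real.sqrt_sq zero_le_two]
  calc ∑ j ∈ s, r (m + j) / |(n : ℝ) - j|
      = ∑ j ∈ near, r (m + j) * |(n : ℝ) - j|⁻¹ + ∑ j ∈ far, r (m + j) * |(n : ℝ) - j|⁻¹ := by
        simp only [div_eq_mul_inv, near, far, sum_filter_add_sum_filter_not]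
    _ ≤ _ := add_le_add hnear hfar
    _ = _ := by rw [Real.sqrt_one, mul_one, hsqrt]; ring

theorem stmt4_general (r : ℤ → ℝ) (hr : ∀ m, 0 ≤ r m) (hsum : Summable fun m => (r m) ^ 2)
    (n : ℕ) (hn : 4 ≤ n) (m : ℤ) :
    (∑' j : {j : ℤ // j % 2 = (n : ℤ) % 2 ∧ j ≠ (n : ℤ)},
        r (m + j.1) / |(n : ℝ) - (j.1 : ℝ)| ≤ Real.sqrt (∑' k : ℤ, (r k) ^ 2)) ∧
    (|(m : ℝ) - (n : ℝ)| ≤ (n : ℝ) / 2 →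
      ∑' j : {j : ℤ // j % 2 = (n : ℤ) % 2 ∧ j ≠ (n : ℤ)},
          r (m + j.1) / |(n : ℝ) - (j.1 : ℝ)| ≤
        Real.sqrt (∑' k : {k : ℤ // (n : ℤ) ≤ |k|}, (r k.1) ^ 2) +
          2 * Real.sqrt (∑' k : ℤ, (r k) ^ 2) / Real.sqrt n) := by
  have hterm : ∀ j : ℤ, 0 ≤ r (m + j) / |(n : ℝ) - j| :=
    fun j => div_nonneg (hr _) (abs_nonneg _)
  refine ⟨tsum_subtype_le_of_sum_le hterm (sum_div_abs_sub_le hsum n m), fun hmn => ?_⟩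
  have hmn' : 2 * (m - n).natAbs ≤ n := by
    have : ((m - n).natAbs : ℝ) ≤ n / 2 := by simpa [Nat.cast_natAbs] using hmn
    exact_mod_cast (by linarith : (2 * (m - n).natAbs : ℝ) ≤ n)
  exact tsum_subtype_le_of_sum_le hterm
    (sum_div_abs_sub_le_sqrt_tail_add hsum n (by omega) m hmn')

/-- One-step bounds for `σ₁(n,1;m) = ∑_{j ≠ n, j ∈ n+2ℤ} r(m+j)/|n-j|`. -/
theorem stmt4 (r : ℤ → ℝ) (hr : ∀ m, 0 ≤ r m) (hsum : Summable fun m => (r m) ^ 2)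
    (n : ℕ) (hn : 4 ≤ n) (m : ℤ) (hm : m % 2 = (n : ℤ) % 2) :
    (∑' j : {j : ℤ // j % 2 = (n : ℤ) % 2 ∧ j ≠ (n : ℤ)},
        r (m + j.1) / |(n : ℝ) - (j.1 : ℝ)| ≤ Real.sqrt (∑' k : ℤ, (r k) ^ 2)) ∧
    (|(m : ℝ) - (n : ℝ)| ≤ (n : ℝ) / 2 →
      ∑' j : {j : ℤ // j % 2 = (n : ℤ) % 2 ∧ j ≠ (n : ℤ)},
          r (m + j.1) / |(n : ℝ) - (j.1 : ℝ)| ≤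
        Real.sqrt (∑' k : {k : ℤ // (n : ℤ) ≤ |k|}, (r k.1) ^ 2) +
          2 * Real.sqrt (∑' k : ℤ, (r k) ^ 2) / Real.sqrt n) :=
  stmt4_general r hr hsum n hn m
end

section
/- Let r = (r(m))_{m∈2ℤ} be a nonnegative ℓ² sequence, n ≥ 4, and set ρ̃_n = E_n(r) + 2‖r‖/√n where E_n(r) = (∑_{|m|≥n} r(m)²)^{1/2}. Define σ₁(n,s;m) = ∑_{j₁,…,j_s ≠ n} r(m+j₁)/|n-j₁| · r(j₁+j₂)/|n-j₂| ⋯ r(j_{s-1}+j_s)/|n-j_s| with all indices in n+2ℤ. Then σ₁(n,2;m) ≤ 2‖r‖ρ̃_n for every m ∈ n+2ℤ. -/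
/-!
Write `σ₁(n,2;m) = ∑_{j} x_j σ₁(n,1;j)` with `x_j = r(m+j)/|n-j|`. By Cauchy–Schwarz and
`∑_{k ≠ 0} 1/(2k)² ≤ 1`, every one-step sum `σ₁(n,1;a)` is at most `‖r‖`, and so is `∑ x_j`.
For `|j - n| ≤ n/2` the one-step sum is at most `ρ̃_n`: its terms with `|j' - n| ≤ n/2` only see
`r` on `|k| ≥ n`, and the remaining ones have `∑ 1/(n-j')² ≤ 4/n`. The same tail bound gives
`∑_{|j-n| > n/2} x_j ≤ 2‖r‖/√n ≤ ρ̃_n`, so each half of the outer sum is at most `‖r‖ ρ̃_n`.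
-/

/-- The `s`-fold weighted convolution sum
`σ₁(n,s;m) = ∑_{j₁,…,j_s ≠ n, j_ν ∈ n+2ℤ} ∏_ν r(j_{ν-1}+j_ν)/|n-j_ν|` with `j₀ = m`. -/
noncomputable def sigma1 (r : ℤ → ℝ) (n : ℤ) : ℕ → ℤ → ℝ
  | 0, _ => 1
  | s + 1, m =>
      ∑' j : {j : ℤ // j % 2 = n % 2 ∧ j ≠ n},
        r (m + j.1) / |(n : ℝ) - (j.1 : ℝ)| * sigma1 r n s j.1

open Function

theorem summable_mul_and_tsum_mul_le_sqrt_mul_sqrt {ι : Type*} {f g : ι → ℝ}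
    (hf : ∀ i, 0 ≤ f i) (hg : ∀ i, 0 ≤ g i)
    (hf2 : Summable fun i => f i ^ 2) (hg2 : Summable fun i => g i ^ 2) :
    (Summable fun i => f i * g i) ∧
      ∑' i, f i * g i ≤ √(∑' i, f i ^ 2) * √(∑' i, g i ^ 2) := by
  have h := Real.summable_and_inner_le_Lp_mul_Lq_tsum_of_nonneg Real.HolderConjugate.two_two hf hg
    (by simpa only [Real.rpow_two] using hf2) (by simpa only [Real.rpow_two] using hg2)
  simpa only [Real.rpow_two, ← Real.sqrt_eq_rpow] using h

theorem tsum_mul_le_sqrt_mul_sqrt_of_le {ι : Type*} {f g : ι → ℝ}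
    (hf : ∀ i, 0 ≤ f i) (hg : ∀ i, 0 ≤ g i)
    (hf2 : Summable fun i => f i ^ 2) (hg2 : Summable fun i => g i ^ 2) {A B : ℝ}
    (hA : ∑' i, f i ^ 2 ≤ A) (hB : ∑' i, g i ^ 2 ≤ B) :
    ∑' i, f i * g i ≤ √A * √B :=
  (summable_mul_and_tsum_mul_le_sqrt_mul_sqrt hf hg hf2 hg2).2.trans <|
    mul_le_mul (Real.sqrt_le_sqrt hA) (Real.sqrt_le_sqrt hB) (Real.sqrt_nonneg _)
      (Real.sqrt_nonneg _)

theorem HasSum.int_natAbs {φ : ℕ → ℝ} {a : ℝ} (h : HasSum φ a) :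
    HasSum (fun k : ℤ => φ k.natAbs) (2 * a - φ 0) := by
  have := HasSum.of_nat_of_neg (f := fun k : ℤ => φ k.natAbs) (by simpa using h)
    (by simpa using h)
  simpa [two_mul] using this

theorem summable_and_tsum_inv_sq_tail_le (K : ℕ) :
    (Summable fun i : ℕ => if K < i then ((i : ℝ) ^ 2)⁻¹ else 0) ∧
      ∑' i : ℕ, (if K < i then ((i : ℝ) ^ 2)⁻¹ else 0) ≤ 2 / (K + 1) := by
  have hs : Summable fun i : ℕ => if K < i then ((i : ℝ) ^ 2)⁻¹ else 0 :=
    (Real.summable_nat_pow_inv.mpr one_lt_two).of_nonneg_of_le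
      (fun i => by split_ifs <;> positivity) (fun i => by split_ifs <;> [exact le_rfl; positivity])
  refine ⟨hs, hs.tsum_le_of_sum_range_le fun N => ?_⟩
  have hIoo : (Finset.range N).filter (K < ·) = Finset.Ioo K N := by
    ext i; simp only [Finset.mem_filter, Finset.mem_range, Finset.mem_Ioo]; omega
  rw [← Finset.sum_filter, hIoo]
  exact sum_Ioo_inv_sq_le K N

abbrev PuncturedCoset (n : ℤ) : Type := {j : ℤ // j % 2 = n % 2 ∧ j ≠ n}

namespace PuncturedCoset

variable {n : ℤ}

theorem sub_eq_two_mul_half (j : PuncturedCoset n) : n - j = 2 * ((n - j) / 2) := by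
  have := j.2.1; omega

theorem injective_half_sub : Injective fun j : PuncturedCoset n => (n - j) / 2 := by
  intro i j h
  have := i.2.1; have := j.2.1
  exact Subtype.ext (by simp only at h; omega)

theorem summable_and_tsum_inv_sq_le (K : ℕ) (s : Set (PuncturedCoset n))
    (hs : ∀ j ∈ s, 2 * (K : ℤ) < |n - j|) :
    (Summable fun j : s => (|(n : ℝ) - j|⁻¹) ^ 2) ∧
      ∑' j : s, (|(n : ℝ) - j|⁻¹) ^ 2 ≤ 1 / (K + 1) := by
  obtain ⟨hts, htK⟩ := summable_and_tsum_inv_sq_tail_le K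
  set t : ℕ → ℝ := fun i => if K < i then ((i : ℝ) ^ 2)⁻¹ else 0 with ht
  have hZ : HasSum (fun k : ℤ => t k.natAbs) (2 * ∑' i, t i) := by
    simpa [ht] using hts.hasSum.int_natAbs
  set e : s → ℤ := fun j => (n - j) / 2
  have he : Injective e := injective_half_sub.comp Subtype.val_injective
  -- `n - j = 2 k` with `K < |k|`, so the weight is `1 / (4 k²)`
  have key : ∀ j : s, (|(n : ℝ) - j|⁻¹) ^ 2 = t (e j).natAbs / 4 := by
    intro j
    have h2k := sub_eq_two_mul_half j.1
    have hK := hs j j.2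
    rw [h2k, abs_mul, abs_two, Int.abs_eq_natAbs (_ / 2)] at hK
    have hlt : K < (e j).natAbs := by simp only [e]; omega
    have hcast : (n : ℝ) - (j : ℤ) = 2 * (e j : ℝ) := by exact_mod_cast h2k
    rw [show t (e j).natAbs = _ from if_pos hlt, hcast, Nat.cast_natAbs, Int.cast_abs, sq_abs,
      inv_pow, sq_abs]
    ring
  have hterms : Summable fun j : s => t (e j).natAbs / 4 :=
    (hZ.summable.comp_injective he).div_const 4
  refine ⟨by simpa only [key] using hterms, ?_⟩
  calc ∑' j : s, (|(n : ℝ) - j|⁻¹) ^ 2 = (∑' j : s, t (e j).natAbs) / 4 := by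
        simp only [key, tsum_div_const]
    _ ≤ (∑' k : ℤ, t k.natAbs) / 4 := by
        gcongr
        exact tsum_comp_le_tsum_of_inj hZ.summable
          (fun k => by simp only [ht]; split_ifs <;> positivity) he
    _ ≤ 2 * (2 / (K + 1)) / 4 := by rw [hZ.tsum_eq]; gcongr
    _ = 1 / (K + 1) := by ring

theorem summable_and_tsum_inv_sq_le_one (n : ℤ) :
    (Summable fun j : PuncturedCoset n => (|(n : ℝ) - j|⁻¹) ^ 2) ∧
      ∑' j : PuncturedCoset n, (|(n : ℝ) - j|⁻¹) ^ 2 ≤ 1 := by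
  obtain ⟨hs, hle⟩ := summable_and_tsum_inv_sq_le 0 Set.univ fun j _ => by
    have := j.2.2; simpa [sub_eq_zero, eq_comm] using this
  refine ⟨(Equiv.Set.univ _).summable_iff.mp hs, ?_⟩
  rw [← tsum_univ]
  simpa using hle

end PuncturedCoset

def nearSet (n : ℤ) : Set (PuncturedCoset n) := {j | 2 * |n - j| ≤ n}

theorem summable_and_tsum_inv_sq_compl_nearSet_le {n : ℤ} (hn : 0 < n) :
    (Summable fun j : ((nearSet n)ᶜ : Set (PuncturedCoset n)) => (|(n : ℝ) - j|⁻¹) ^ 2) ∧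
      ∑' j : ((nearSet n)ᶜ : Set (PuncturedCoset n)), (|(n : ℝ) - j|⁻¹) ^ 2 ≤ 4 / n := by
  obtain ⟨hs, hle⟩ := PuncturedCoset.summable_and_tsum_inv_sq_le (n / 4).toNat (nearSet n)ᶜ
    fun j hj => by
      have h2k := PuncturedCoset.sub_eq_two_mul_half j
      have hfar : ¬ 2 * |n - j| ≤ n := hj
      rw [h2k, abs_mul, abs_two] at hfar ⊢
      have := le_abs_self ((n - j) / 2); have := neg_abs_le ((n - j) / 2)
      omega
  refine ⟨hs, hle.trans ?_⟩
  have hK : (n : ℝ) ≤ 4 * (((n / 4).toNat : ℕ) + 1) := by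
    exact_mod_cast (by omega : n ≤ 4 * (((n / 4).toNat : ℤ) + 1))
  rw [div_le_div_iff₀ (by positivity) (by exact_mod_cast hn)]
  linarith

section

variable {r : ℤ → ℝ} {n : ℤ}

theorem sigma1_one (a : ℤ) :
    sigma1 r n 1 a = ∑' j : PuncturedCoset n, r (a + j) / |(n : ℝ) - j| := by
  simp only [sigma1, mul_one]

theorem sigma1_two (m : ℤ) :
    sigma1 r n 2 m = ∑' j : PuncturedCoset n, r (m + j) / |(n : ℝ) - j| * sigma1 r n 1 j :=
  rfl

theorem summable_and_sigma1_one_le (hr : ∀ k, 0 ≤ r k) (hsum : Summable fun k => r k ^ 2)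
    (a : ℤ) :
    (Summable fun j : PuncturedCoset n => r (a + j) / |(n : ℝ) - j|) ∧
      sigma1 r n 1 a ≤ √(∑' k, r k ^ 2) := by
  have he : Injective fun j : PuncturedCoset n => a + j :=
    (add_right_injective a).comp Subtype.val_injective
  obtain ⟨hw, hw1⟩ := PuncturedCoset.summable_and_tsum_inv_sq_le_one n
  have hr2 := hsum.comp_injective he
  simp only [sigma1_one, div_eq_mul_inv]
  refine ⟨(summable_mul_and_tsum_mul_le_sqrt_mul_sqrt (fun j => hr _) (fun j => by positivity)
    hr2 hw).1, ?_⟩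
  simpa using tsum_mul_le_sqrt_mul_sqrt_of_le (fun j => hr _) (fun j => by positivity) hr2 hw
    (tsum_comp_le_tsum_of_inj hsum (fun k => sq_nonneg _) he) hw1

theorem sigma1_one_nonneg (hr : ∀ k, 0 ≤ r k) (a : ℤ) : 0 ≤ sigma1 r n 1 a := by
  rw [sigma1_one]
  exact tsum_nonneg fun j => div_nonneg (hr _) (abs_nonneg _)

theorem tsum_subtype_div_le (hr : ∀ k, 0 ≤ r k) (hsum : Summable fun k => r k ^ 2) (a : ℤ)
    (s : Set (PuncturedCoset n)) {A B : ℝ} (hws : Summable fun j : s => (|(n : ℝ) - j|⁻¹) ^ 2)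
    (hA : ∑' j : s, r (a + j) ^ 2 ≤ A) (hB : ∑' j : s, (|(n : ℝ) - j|⁻¹) ^ 2 ≤ B) :
    ∑' j : s, r (a + j) / |(n : ℝ) - j| ≤ √A * √B := by
  have he : Injective fun j : s => a + j :=
    (add_right_injective a).comp (Subtype.val_injective.comp Subtype.val_injective)
  simp only [div_eq_mul_inv]
  exact tsum_mul_le_sqrt_mul_sqrt_of_le (fun j => hr _) (fun j => by positivity)
    (hsum.comp_injective he) hws hA hB

theorem tsum_compl_nearSet_div_le (hr : ∀ k, 0 ≤ r k) (hsum : Summable fun k => r k ^ 2)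
    (hn : 0 < n) (a : ℤ) :
    ∑' j : ((nearSet n)ᶜ : Set (PuncturedCoset n)), r (a + j) / |(n : ℝ) - j| ≤
      2 * √(∑' k, r k ^ 2) / √n := by
  have he : Injective fun j : ((nearSet n)ᶜ : Set (PuncturedCoset n)) => a + j :=
    (add_right_injective a).comp (Subtype.val_injective.comp Subtype.val_injective)
  obtain ⟨hws, hwle⟩ := summable_and_tsum_inv_sq_compl_nearSet_le hn
  refine (tsum_subtype_div_le hr hsum a _ hws
    (tsum_comp_le_tsum_of_inj hsum (fun k => sq_nonneg _) he) hwle).trans_eq ?_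
  rw [Real.sqrt_div' _ (by exact_mod_cast hn.le), show (4 : ℝ) = 2 ^ 2 by norm_num,
    Real.sqrt_sq zero_le_two]
  ring

theorem le_abs_add_of_mem_nearSet {a : ℤ} (ha : 2 * |n - a| ≤ n) {j : PuncturedCoset n}
    (hj : j ∈ nearSet n) : n ≤ |a + j| := by
  have hj' : 2 * |n - j| ≤ n := hj
  have := le_abs_self (n - a); have := le_abs_self (n - j); have := le_abs_self (a + j)
  omega

theorem tsum_nearSet_div_le (hr : ∀ k, 0 ≤ r k) (hsum : Summable fun k => r k ^ 2)
    {a : ℤ} (ha : 2 * |n - a| ≤ n) :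
    ∑' j : nearSet n, r (a + j) / |(n : ℝ) - j| ≤ √(∑' k : {k : ℤ // n ≤ |k|}, r k ^ 2) := by
  set e : nearSet n → {k : ℤ // n ≤ |k|} := fun j => ⟨a + j, le_abs_add_of_mem_nearSet ha j.2⟩
  have he : Injective e := fun i j h =>
    Subtype.val_injective (Subtype.val_injective (add_left_cancel (congrArg Subtype.val h)))
  obtain ⟨hw, hw1⟩ := PuncturedCoset.summable_and_tsum_inv_sq_le_one n
  simpa using tsum_subtype_div_le hr hsum a (nearSet n) (hw.subtype _)
    (tsum_comp_le_tsum_of_inj (f := fun k : {k : ℤ // n ≤ |k|} => r k ^ 2) (hsum.subtype _)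
      (fun k => sq_nonneg _) he)
    ((hw.tsum_subtype_le _ _ fun j => sq_nonneg _).trans hw1)

theorem sigma1_one_le_of_near (hr : ∀ k, 0 ≤ r k) (hsum : Summable fun k => r k ^ 2)
    (hn : 0 < n) {a : ℤ} (ha : 2 * |n - a| ≤ n) :
    sigma1 r n 1 a ≤ √(∑' k : {k : ℤ // n ≤ |k|}, r k ^ 2) + 2 * √(∑' k, r k ^ 2) / √n := by
  have hS := (summable_and_sigma1_one_le (n := n) hr hsum a).1
  rw [sigma1_one, ← (hS.subtype _).tsum_add_tsum_compl (hS.subtype _)]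
  exact add_le_add (tsum_nearSet_div_le hr hsum ha) (tsum_compl_nearSet_div_le hr hsum hn a)

theorem sigma1_two_le (hr : ∀ k, 0 ≤ r k) (hsum : Summable fun k => r k ^ 2) (hn : 0 < n)
    (m : ℤ) :
    sigma1 r n 2 m ≤ 2 * √(∑' k, r k ^ 2) *
      (√(∑' k : {k : ℤ // n ≤ |k|}, r k ^ 2) + 2 * √(∑' k, r k ^ 2) / √n) := by
  set N := √(∑' k, r k ^ 2)
  set ρ := √(∑' k : {k : ℤ // n ≤ |k|}, r k ^ 2) + 2 * N / √n
  set x : PuncturedCoset n → ℝ := fun j => r (m + j) / |(n : ℝ) - j|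
  have hx0 : ∀ j, 0 ≤ x j := fun j => div_nonneg (hr _) (abs_nonneg _)
  obtain ⟨hx, hxN⟩ := summable_and_sigma1_one_le (n := n) hr hsum m
  have hS0 : ∀ a, 0 ≤ sigma1 r n 1 a := sigma1_one_nonneg hr
  have hSN : ∀ a, sigma1 r n 1 a ≤ N := fun a => (summable_and_sigma1_one_le hr hsum a).2
  have hxS : Summable fun j => x j * sigma1 r n 1 j :=
    (hx.mul_right N).of_nonneg_of_le (fun j => mul_nonneg (hx0 j) (hS0 _))
      (fun j => mul_le_mul_of_nonneg_left (hSN _) (hx0 j))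
  have hfar : 2 * N / √n ≤ ρ := le_add_of_nonneg_left (Real.sqrt_nonneg _)
  -- near `n` the inner sum is small, away from `n` the outer weight is
  have hnear : ∑' j : nearSet n, x j * sigma1 r n 1 j ≤ N * ρ :=
    calc ∑' j : nearSet n, x j * sigma1 r n 1 j ≤ ∑' j : nearSet n, x j * ρ :=
          (hxS.subtype _).tsum_le_tsum
            (fun j => mul_le_mul_of_nonneg_left (sigma1_one_le_of_near hr hsum hn j.2) (hx0 j))
            ((hx.subtype _).mul_right ρ)
      _ = (∑' j : nearSet n, x j) * ρ := tsum_mul_right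
      _ ≤ N * ρ := by
          gcongr
          exact (hx.tsum_subtype_le x _ hx0).trans (by simpa [sigma1_one] using hxN)
  have hcompl : ∑' j : ((nearSet n)ᶜ : Set _), x j * sigma1 r n 1 j ≤ N * ρ :=
    calc ∑' j : ((nearSet n)ᶜ : Set _), x j * sigma1 r n 1 j
          ≤ ∑' j : ((nearSet n)ᶜ : Set _), x j * N :=
          (hxS.subtype _).tsum_le_tsum (fun j => mul_le_mul_of_nonneg_left (hSN _) (hx0 j))
            ((hx.subtype _).mul_right N)
      _ = (∑' j : ((nearSet n)ᶜ : Set _), x j) * N := tsum_mul_right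
      _ ≤ ρ * N := by gcongr; exact (tsum_compl_nearSet_div_le hr hsum hn m).trans hfar
      _ = N * ρ := mul_comm _ _
  rw [sigma1_two, ← (hxS.subtype (nearSet n)).tsum_add_tsum_compl (hxS.subtype _)]
  exact (add_le_add hnear hcompl).trans_eq (by ring)

end

theorem stmt5_general (r : ℤ → ℝ) (hr : ∀ m, 0 ≤ r m) (hsum : Summable fun m => (r m) ^ 2)
    (n : ℕ) (hn : 4 ≤ n) (m : ℤ) :
    sigma1 r (n : ℤ) 2 m ≤
      2 * Real.sqrt (∑' k : ℤ, (r k) ^ 2) *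
        (Real.sqrt (∑' k : {k : ℤ // (n : ℤ) ≤ |k|}, (r k.1) ^ 2) +
          2 * Real.sqrt (∑' k : ℤ, (r k) ^ 2) / Real.sqrt n) := by
  simpa using sigma1_two_le hr hsum (by omega : (0 : ℤ) < n) m

/-- `σ₁(n,2;m) ≤ 2‖r‖ρ̃_n` where `ρ̃_n = E_n(r) + 2‖r‖/√n`. -/
theorem stmt5 (r : ℤ → ℝ) (hr : ∀ m, 0 ≤ r m) (hsum : Summable fun m => (r m) ^ 2)
    (n : ℕ) (hn : 4 ≤ n) (m : ℤ) (hm : m % 2 = (n : ℤ) % 2) :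
    sigma1 r (n : ℤ) 2 m ≤
      2 * Real.sqrt (∑' k : ℤ, (r k) ^ 2) *
        (Real.sqrt (∑' k : {k : ℤ // (n : ℤ) ≤ |k|}, (r k.1) ^ 2) +
          2 * Real.sqrt (∑' k : ℤ, (r k) ^ 2) / Real.sqrt n) :=
  stmt5_general r hr hsum n hn m
end

section
/- Let r ∈ ℓ²(2ℤ) be nonnegative and n ≥ 1. Define σ₂(n,2;m) = ∑_{j₁,j₂ ∈ (n+2ℤ)\{±n}} r(m+j₁) r(j₁+j₂) / |n² - j₂²|. Then σ₂(n,2;m) ≤ ‖r‖² · (2 log 6n)/n for every m ∈ n + 2ℤ. -/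
/-!
AM–GM gives `r(m+j₁) r(j₁+j₂) ≤ (r(m+j₁)² + r(j₁+j₂)²)/2`, and for fixed `j₂` the sum over `j₁`
of either square is a sum of squares of a translate of `r`, hence at most `‖r‖²`. What remains is
`∑_{j ∈ n+2ℤ} 1/|n² - j²|`. Writing `j = n + 2t` gives `|n² - j²| = 4|t||t+n|`, and partial
fractions `1/(t(t+n)) = (1/t - 1/(t+n))/n` telescope on `t ≥ 1` and on `t ≤ -n-1` (the mirror
image under `t ↦ -n-t`), while on `-n < t < 0` they split into two harmonic sums. Altogether the
weight sum is at most `H_n/n ≤ (1 + log n)/n ≤ 2 log(6n)/n`.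
-/

open Finset

lemma sum_range_sub_sum_range_add_le {g : ℕ → ℝ} (hg : ∀ k, 0 ≤ g k) (n N : ℕ) :
    ∑ k ∈ range N, (g k - g (n + k)) ≤ ∑ k ∈ range n, g k := by
  have hsub : ∑ k ∈ range N, g k ≤ ∑ k ∈ range (n + N), g k :=
    sum_le_sum_of_subset_of_nonneg (range_subset_range.2 (by omega)) fun k _ _ => hg k
  rw [sum_range_add] at hsub
  rw [sum_sub_distrib]
  linarith

lemma inv_mul_le_inv_add_mul_inv_add_inv {a b : ℝ} (ha : 0 ≤ a) (hb : 0 ≤ b) :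
    (a * b)⁻¹ ≤ (a + b)⁻¹ * (a⁻¹ + b⁻¹) := by
  rcases ha.eq_or_lt with rfl | ha
  · simp only [zero_mul, inv_zero]; positivity
  rcases hb.eq_or_lt with rfl | hb
  · simp only [mul_zero, inv_zero]; positivity
  exact le_of_eq (by field_simp; ring)

lemma sum_range_inv_natCast_le_harmonic (n : ℕ) :
    ∑ k ∈ range n, (k : ℝ)⁻¹ ≤ harmonic n := by
  calc ∑ k ∈ range n, (k : ℝ)⁻¹ ≤ ∑ k ∈ range (n + 1), (k : ℝ)⁻¹ :=
        sum_le_sum_of_subset_of_nonneg (range_subset_range.2 (by omega)) fun k _ _ => by positivity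
    _ = harmonic n := by simp [sum_range_succ', harmonic]

lemma harmonic_div_le_two_mul_log {n : ℕ} (hn : 0 < n) :
    (harmonic n : ℝ) / n ≤ 2 * Real.log (6 * n) / n := by
  have hlog6 : 1 ≤ Real.log 6 := by
    rw [Real.le_log_iff_exp_le (by norm_num)]
    exact Real.exp_one_lt_d9.le.trans (by norm_num)
  have hlogn : 0 ≤ Real.log n := Real.log_natCast_nonneg n
  rw [Real.log_mul (by norm_num) (by positivity)]
  gcongr
  linarith [harmonic_le_one_add_log n]

/-- `|n² - (n + 2t)²|⁻¹ = invDistProd n t / 4`; through `0⁻¹ = 0` it vanishes at `t = 0` and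
`t = -n`, i.e. at the excluded `j = ±n`. -/
noncomputable def invDistProd (n : ℕ) (t : ℤ) : ℝ := (|(t : ℝ)| * |(t : ℝ) + n|)⁻¹

lemma invDistProd_nonneg (n : ℕ) (t : ℤ) : 0 ≤ invDistProd n t := by
  unfold invDistProd; positivity

lemma invDistProd_neg_sub (n : ℕ) (t : ℤ) : invDistProd n (-n - t) = invDistProd n t := by
  unfold invDistProd
  push_cast
  rw [show -(n : ℝ) - t + n = -t by ring, show -(n : ℝ) - t = -(t + n) by ring, abs_neg, abs_neg,
    mul_comm]

lemma invDistProd_natCast_add_one (n : ℕ) (k : ℕ) :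
    invDistProd n (k + 1) = (((k : ℝ) + 1) * ((k : ℝ) + 1 + n))⁻¹ := by
  unfold invDistProd
  push_cast
  rw [abs_of_pos (by positivity), abs_of_pos (by positivity)]

lemma sum_range_invDistProd_natCast_add_one_le {n : ℕ} (hn : 0 < n) (N : ℕ) :
    ∑ k ∈ range N, invDistProd n (k + 1) ≤ (harmonic n : ℝ) / n := by
  have hpf : ∀ k : ℕ,
      invDistProd n (k + 1) = (n : ℝ)⁻¹ * (((k : ℝ) + 1)⁻¹ - (((n + k : ℕ) : ℝ) + 1)⁻¹) := by
    intro k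
    rw [invDistProd_natCast_add_one]
    push_cast
    field_simp
    ring
  simp_rw [hpf, ← mul_sum, div_eq_inv_mul]
  gcongr
  calc _ ≤ ∑ k ∈ range n, ((k : ℝ) + 1)⁻¹ :=
        sum_range_sub_sum_range_add_le (g := fun k : ℕ => ((k : ℝ) + 1)⁻¹)
          (fun k => by positivity) n N
    _ = harmonic n := by simp [harmonic]

lemma sum_range_invDistProd_neg_le {n : ℕ} (hn : 0 < n) :
    ∑ k ∈ range n, invDistProd n (-(k + 1)) ≤ 2 * ((harmonic n : ℝ) / n) := by
  have hterm : ∀ k ∈ range n, invDistProd n (-(k + 1)) ≤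
      (n : ℝ)⁻¹ * (((k : ℝ) + 1)⁻¹ + ((n - 1 - k : ℕ) : ℝ)⁻¹) := by
    intro k hk
    have hkn : k < n := mem_range.mp hk
    have hb : ((n - 1 - k : ℕ) : ℝ) = n - (k + 1) := by
      rw [Nat.cast_sub (by omega), Nat.cast_sub (by omega)]; push_cast; ring
    have hsum : ((k : ℝ) + 1) + ((n - 1 - k : ℕ) : ℝ) = n := by rw [hb]; ring
    unfold invDistProd
    push_cast
    rw [show -((k : ℝ) + 1) + n = ((n - 1 - k : ℕ) : ℝ) by rw [hb]; ring, abs_neg,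
      abs_of_pos (by positivity), abs_of_nonneg (Nat.cast_nonneg _), ← hsum]
    exact inv_mul_le_inv_add_mul_inv_add_inv (by positivity) (Nat.cast_nonneg _)
  have hreflect : ∑ k ∈ range n, ((n - 1 - k : ℕ) : ℝ)⁻¹ = ∑ k ∈ range n, (k : ℝ)⁻¹ :=
    sum_range_reflect (fun k : ℕ => (k : ℝ)⁻¹) n
  have hharm : ∑ k ∈ range n, ((k : ℝ) + 1)⁻¹ = harmonic n := by simp [harmonic]
  calc ∑ k ∈ range n, invDistProd n (-(k + 1))
      ≤ ∑ k ∈ range n, (n : ℝ)⁻¹ * (((k : ℝ) + 1)⁻¹ + ((n - 1 - k : ℕ) : ℝ)⁻¹) :=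
        sum_le_sum hterm
    _ ≤ (n : ℝ)⁻¹ * (harmonic n + harmonic n) := by
      rw [← mul_sum, sum_add_distrib, hreflect, hharm]
      gcongr
      exact sum_range_inv_natCast_le_harmonic n
    _ = 2 * ((harmonic n : ℝ) / n) := by ring

lemma exists_hasSum_invDistProd_le {n : ℕ} (hn : 0 < n) :
    ∃ a ≤ 4 * ((harmonic n : ℝ) / n), HasSum (invDistProd n) a := by
  have hsummable : Summable fun k : ℕ => invDistProd n (k + 1) :=
    summable_of_sum_range_le (fun k => invDistProd_nonneg n _)
      (sum_range_invDistProd_natCast_add_one_le hn)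
  set P := ∑' k : ℕ, invDistProd n (k + 1)
  have hP : P ≤ (harmonic n : ℝ) / n :=
    Real.tsum_le_of_sum_range_le (fun k => invDistProd_nonneg n _)
      (sum_range_invDistProd_natCast_add_one_le hn)
  have hzero : invDistProd n 0 = 0 := by simp [invDistProd]
  have hnonneg : HasSum (fun k : ℕ => invDistProd n k) P := by
    rw [← hasSum_nat_add_iff' 1]
    simpa [hzero] using hsummable.hasSum
  have hneg : HasSum (fun k : ℕ => invDistProd n (-(k + 1)))
      (∑ k ∈ range n, invDistProd n (-(k + 1)) + P) := by
    rw [← hasSum_nat_add_iff' n, add_sub_cancel_left]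
    have hreflect : ∀ k : ℕ, invDistProd n (-((k + n : ℕ) + 1)) = invDistProd n (k + 1) := by
      intro k
      rw [← invDistProd_neg_sub]
      congr 1
      push_cast
      ring
    simpa only [hreflect] using hsummable.hasSum
  refine ⟨P + (∑ k ∈ range n, invDistProd n (-(k + 1)) + P), ?_,
    hnonneg.of_nat_of_neg_add_one hneg⟩
  linarith [sum_range_invDistProd_neg_le hn]

lemma sum_inv_abs_sq_sub_sq_le {n : ℕ} (hn : 0 < n) (J : Finset ℤ)
    (hJ : ∀ j ∈ J, j % 2 = (n : ℤ) % 2) :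
    ∑ j ∈ J, |(n : ℝ) ^ 2 - (j : ℝ) ^ 2|⁻¹ ≤ (harmonic n : ℝ) / n := by
  obtain ⟨a, ha, hsum⟩ := exists_hasSum_invDistProd_le hn
  set half : ℤ → ℤ := fun j => (j - n) / 2
  have hhalf : ∀ j ∈ J, j = n + 2 * half j := fun j hj => by
    have := hJ j hj; simp only [half]; omega
  have hval : ∀ j ∈ J, |(n : ℝ) ^ 2 - (j : ℝ) ^ 2|⁻¹ = 4⁻¹ * invDistProd n (half j) := by
    intro j hj
    have hcast : (j : ℝ) = n + 2 * (half j : ℝ) := by exact_mod_cast hhalf j hj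
    rw [hcast, invDistProd, show (n : ℝ) ^ 2 - (n + 2 * half j) ^ 2 = -(4 * (half j * (half j + n)))
      by ring, abs_neg, abs_mul, abs_mul, abs_of_pos four_pos, mul_inv]
  have hinj : Set.InjOn half J := fun x hx y hy hxy => by
    rw [hhalf x hx, hhalf y hy, hxy]
  calc ∑ j ∈ J, |(n : ℝ) ^ 2 - (j : ℝ) ^ 2|⁻¹ = 4⁻¹ * ∑ t ∈ J.image half, invDistProd n t := by
        rw [sum_image hinj, mul_sum]; exact sum_congr rfl hval
    _ ≤ 4⁻¹ * a := by
        gcongr; exact sum_le_hasSum _ (fun t _ => invDistProd_nonneg n t) hsum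
    _ ≤ (harmonic n : ℝ) / n := by linarith

lemma sum_comp_add_le_tsum {f : ℤ → ℝ} (hf : ∀ k, 0 ≤ f k) (hs : Summable f)
    (A : Finset ℤ) (c : ℤ) :
    ∑ a ∈ A, f (a + c) ≤ ∑' k, f k := by
  rw [← (Equiv.addRight c).tsum_eq f]
  exact ((Equiv.addRight c).summable_iff.mpr hs).sum_le_tsum A fun k _ => hf _

lemma sum_mul_mul_le_tsum_sq_mul_sum {r W : ℤ → ℝ} (hr : Summable fun k => r k ^ 2)
    (hW : ∀ b, 0 ≤ W b) (m : ℤ) (S : Finset (ℤ × ℤ)) :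
    ∑ q ∈ S, r (m + q.1) * r (q.1 + q.2) * W q.2 ≤
      (∑' k, r k ^ 2) * ∑ b ∈ S.image Prod.snd, W b := by
  set A := S.image Prod.fst
  set B := S.image Prod.snd
  set C := ∑' k, r k ^ 2
  set G : ℤ × ℤ → ℝ := fun q => (r (m + q.1) ^ 2 + r (q.1 + q.2) ^ 2) / 2 * W q.2
  have hG : ∀ q, 0 ≤ G q := fun q => mul_nonneg (by positivity) (hW _)
  have hinner : ∀ b, ∑ a ∈ A, (r (m + a) ^ 2 + r (a + b) ^ 2) / 2 ≤ C := by
    intro b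
    have h₁ := sum_comp_add_le_tsum (fun k => sq_nonneg (r k)) hr A m
    have h₂ := sum_comp_add_le_tsum (fun k => sq_nonneg (r k)) hr A b
    simp only [add_comm _ m] at h₁
    rw [← sum_div, sum_add_distrib]
    linarith
  calc ∑ q ∈ S, r (m + q.1) * r (q.1 + q.2) * W q.2 ≤ ∑ q ∈ S, G q := by
        refine sum_le_sum fun q _ => mul_le_mul_of_nonneg_right ?_ (hW _)
        linarith [two_mul_le_add_sq (r (m + q.1)) (r (q.1 + q.2))]
    _ ≤ ∑ q ∈ A ×ˢ B, G q :=
        sum_le_sum_of_subset_of_nonneg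
          (fun q hq => mem_product.2 ⟨mem_image_of_mem _ hq, mem_image_of_mem _ hq⟩)
          fun q _ _ => hG q
    _ = ∑ b ∈ B, (∑ a ∈ A, (r (m + a) ^ 2 + r (a + b) ^ 2) / 2) * W b := by
        rw [sum_product_right]; simp only [G, sum_mul]
    _ ≤ ∑ b ∈ B, C * W b := by gcongr with b; exacts [hW b, hinner b]
    _ = C * ∑ b ∈ B, W b := (mul_sum _ _ _).symm

theorem stmt7_general (r : ℤ → ℝ) (hsum : Summable fun m => (r m) ^ 2)
    (n : ℕ) (hn : 1 ≤ n) (m : ℤ) :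
    ∑' p : {p : ℤ × ℤ //
        (p.1 % 2 = (n : ℤ) % 2 ∧ p.1 ≠ (n : ℤ) ∧ p.1 ≠ -(n : ℤ)) ∧
        (p.2 % 2 = (n : ℤ) % 2 ∧ p.2 ≠ (n : ℤ) ∧ p.2 ≠ -(n : ℤ))},
      r (m + p.1.1) * r (p.1.1 + p.1.2) / |(n : ℝ) ^ 2 - (p.1.2 : ℝ) ^ 2| ≤
      (∑' k : ℤ, (r k) ^ 2) * (2 * Real.log (6 * n) / n) := by
  have hweight := harmonic_div_le_two_mul_log hn
  have hlog : 0 ≤ Real.log (6 * n) := Real.log_nonneg (by norm_cast; omega)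
  refine tsum_le_of_sum_le' (by positivity) fun s => ?_
  set S := s.map (Function.Embedding.subtype _)
  have hparity : ∀ j ∈ S.image Prod.snd, j % 2 = (n : ℤ) % 2 := by
    simp only [S, mem_image, mem_map, Function.Embedding.coe_subtype]
    rintro j ⟨_, ⟨p, -, rfl⟩, rfl⟩
    exact p.2.2.1
  calc ∑ p ∈ s, r (m + p.1.1) * r (p.1.1 + p.1.2) / |(n : ℝ) ^ 2 - (p.1.2 : ℝ) ^ 2|
      = ∑ q ∈ S, r (m + q.1) * r (q.1 + q.2) * |(n : ℝ) ^ 2 - (q.2 : ℝ) ^ 2|⁻¹ := by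
        simp only [S, sum_map, Function.Embedding.coe_subtype, div_eq_mul_inv]
    _ ≤ (∑' k : ℤ, (r k) ^ 2) * ∑ j ∈ S.image Prod.snd, |(n : ℝ) ^ 2 - (j : ℝ) ^ 2|⁻¹ :=
        sum_mul_mul_le_tsum_sq_mul_sum (W := fun j : ℤ => |(n : ℝ) ^ 2 - (j : ℝ) ^ 2|⁻¹) hsum
          (fun _ => inv_nonneg.2 (abs_nonneg _)) m S
    _ ≤ (∑' k : ℤ, (r k) ^ 2) * (2 * Real.log (6 * n) / n) := by
        gcongr
        exact (sum_inv_abs_sq_sub_sq_le hn _ hparity).trans hweight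

/-- `σ₂(n,2;m) = ∑_{j₁,j₂ ∈ (n+2ℤ)\{±n}} r(m+j₁) r(j₁+j₂)/|n² - j₂²| ≤ ‖r‖²·(2 log 6n)/n`. -/
theorem stmt7 (r : ℤ → ℝ) (hr : ∀ m, 0 ≤ r m) (hsum : Summable fun m => (r m) ^ 2)
    (n : ℕ) (hn : 1 ≤ n) (m : ℤ) (hm : m % 2 = (n : ℤ) % 2) :
    ∑' p : {p : ℤ × ℤ //
        (p.1 % 2 = (n : ℤ) % 2 ∧ p.1 ≠ (n : ℤ) ∧ p.1 ≠ -(n : ℤ)) ∧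
        (p.2 % 2 = (n : ℤ) % 2 ∧ p.2 ≠ (n : ℤ) ∧ p.2 ≠ -(n : ℤ))},
      r (m + p.1.1) * r (p.1.1 + p.1.2) / |(n : ℝ) ^ 2 - (p.1.2 : ℝ) ^ 2| ≤
      (∑' k : ℤ, (r k) ^ 2) * (2 * Real.log (6 * n) / n) :=
  stmt7_general r hsum n hn m
end

section
/- Let V(m) = m·w(m) where w ∈ ℓ²(2ℤ), and set r(m) = max(|w(m)|, |w(-m)|). Then for each n ≥ 4, the sum ∑_{k ∈ (n+2ℤ), k ≠ ±n} |V(k-n)|/|n²-k²| is at most ‖r‖/√n + E_n(r), where E_n(r) = (∑_{|m| ≥ n} r(m)²)^{1/2} and ‖r‖ is the ℓ²-norm of r. -/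
/-!
Since `|V(k-n)| = |k-n| |w(k-n)|` and `n² - k² = (n-k)(n+k)`, each term is at most
`r(k-n) / |n+k|`. Split the sum at `k > 0` and apply Cauchy–Schwarz to each half. For `k > 0`
the numbers `n + k` are distinct even integers `> n`, so `∑ 1/(n+k)² ≤ 1/n`; for `k ≤ 0` they
are distinct nonzero even integers, so `∑ 1/(n+k)² ≤ 1`, while `|k - n| ≥ n` puts the weights
`r(k-n)` into the tail `E_n(r)`.
-/

open Finset

lemma sum_inv_sq_le_of_lt {t : Finset ℤ} {j : ℕ} (ht : ∀ i ∈ t, (j : ℤ) < i) :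
    ∑ i ∈ t, ((i : ℝ) ^ 2)⁻¹ ≤ 2 / (j + 1) := by
  have hinj : Set.InjOn Int.toNat t := fun a ha b hb hab => by
    have := ht a ha; have := ht b hb; omega
  set u := t.image Int.toNat
  have hu : u ⊆ Ioo j (u.sup id + 1) := fun i hi => by
    obtain ⟨k, hk, rfl⟩ := mem_image.1 hi
    have := ht k hk
    exact mem_Ioo.2 ⟨by omega, Nat.lt_succ_of_le (le_sup (f := id) hi)⟩
  calc ∑ i ∈ t, ((i : ℝ) ^ 2)⁻¹ = ∑ i ∈ u, ((i : ℝ) ^ 2)⁻¹ := by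
        rw [sum_image hinj]
        refine sum_congr rfl fun i hi => ?_
        rw [← Int.cast_natCast, Int.toNat_of_nonneg (by have := ht i hi; omega)]
    _ ≤ ∑ i ∈ Ioo j (u.sup id + 1), ((i : ℝ) ^ 2)⁻¹ :=
        sum_le_sum_of_subset_of_nonneg hu fun _ _ _ => by positivity
    _ ≤ 2 / (j + 1) := sum_Ioo_inv_sq_le _ _

lemma sum_inv_sq_le_four (t : Finset ℤ) : ∑ i ∈ t, ((i : ℝ) ^ 2)⁻¹ ≤ 4 := by
  have hpos : ∀ u : Finset ℤ, (∀ i ∈ u, 0 < i) → ∑ i ∈ u, ((i : ℝ) ^ 2)⁻¹ ≤ 2 := fun u hu => by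
    simpa using sum_inv_sq_le_of_lt (j := 0) (by simpa using hu)
  rw [← sum_filter_of_ne (p := (· ≠ 0)) fun i _ hi => by rintro rfl; simp at hi,
    ← sum_filter_add_sum_filter_not _ (0 < ·)]
  have hneg : ∑ i ∈ (t.filter (· ≠ 0)).filter (¬ 0 < ·), ((i : ℝ) ^ 2)⁻¹ ≤ 2 := by
    have := hpos (((t.filter (· ≠ 0)).filter (¬ 0 < ·)).image Neg.neg) fun i hi => by
      simp only [mem_image, mem_filter] at hi
      omega
    simpa [sum_image] using this
  exact (add_le_add (hpos _ fun _ hi => (mem_filter.1 hi).2) hneg).trans_eq (by norm_num)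

lemma sum_inv_sq_add_of_emod_two_eq {m : ℤ} {t : Finset ℤ} (ht : ∀ k ∈ t, k % 2 = m % 2) :
    ∑ k ∈ t, (((m : ℝ) + k) ^ 2)⁻¹ =
      (∑ j ∈ t.image (fun k => (m + k) / 2), ((j : ℝ) ^ 2)⁻¹) / 4 := by
  rw [sum_image fun a ha b hb hab => by
    have := ht a ha; have := ht b hb; omega, sum_div]
  refine sum_congr rfl fun k hk => ?_
  have hhalf : (m : ℝ) + k = 2 * ((m + k) / 2 : ℤ) := by
    have := ht k hk
    exact_mod_cast (by omega : m + k = 2 * ((m + k) / 2))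
  rw [hhalf, mul_pow, mul_inv]
  ring

lemma sum_inv_sq_add_le_inv {n : ℕ} (hn : 0 < n) {t : Finset ℤ}
    (ht : ∀ k ∈ t, 0 < k ∧ k % 2 = n % 2) : ∑ k ∈ t, (((n : ℝ) + k) ^ 2)⁻¹ ≤ (n : ℝ)⁻¹ := by
  have htail := sum_inv_sq_le_of_lt (j := n / 2) (t := t.image fun k => (n + k) / 2)
    fun i hi => by
      obtain ⟨k, hk, rfl⟩ := mem_image.1 hi
      have := ht k hk
      omega
  have hn2 : (n : ℝ) ≤ 2 * ((n / 2 : ℕ) + 1) := by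
    exact_mod_cast (by omega : n ≤ 2 * (n / 2 + 1))
  have hhalve := sum_inv_sq_add_of_emod_two_eq (m := n) fun k hk => (ht k hk).2
  rw [Int.cast_natCast] at hhalve
  calc ∑ k ∈ t, (((n : ℝ) + k) ^ 2)⁻¹ ≤ 2 / ((n / 2 : ℕ) + 1) / 4 := by rw [hhalve]; gcongr
    _ = (2 * ((n / 2 : ℕ) + 1) : ℝ)⁻¹ := by field_simp; ring
    _ ≤ (n : ℝ)⁻¹ := inv_anti₀ (by positivity) hn2

lemma sum_inv_sq_add_le_one {m : ℤ} {t : Finset ℤ} (ht : ∀ k ∈ t, k % 2 = m % 2) :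
    ∑ k ∈ t, (((m : ℝ) + k) ^ 2)⁻¹ ≤ 1 := by
  rw [sum_inv_sq_add_of_emod_two_eq ht]
  linarith [sum_inv_sq_le_four (t.image fun k => (m + k) / 2)]

lemma sum_comp_le_tsum_subtype {α β : Type*} {f : β → ℝ} (hf : Summable f) (hf0 : ∀ b, 0 ≤ f b)
    {s : Set β} {φ : α → β} {u : Finset α} (hφ : Set.InjOn φ u) (hmaps : ∀ a ∈ u, φ a ∈ s) :
    ∑ a ∈ u, f (φ a) ≤ ∑' b : s, f b := by
  classical
  rw [← sum_image hφ, _root_.tsum_subtype]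
  calc ∑ b ∈ u.image φ, f b = ∑ b ∈ u.image φ, s.indicator f b :=
        sum_congr rfl fun b hb => by
          obtain ⟨a, ha, rfl⟩ := mem_image.1 hb
          exact (Set.indicator_of_mem (hmaps a ha) f).symm
    _ ≤ ∑' b, s.indicator f b :=
        (hf.indicator s).sum_le_tsum _ fun b _ => Set.indicator_nonneg (fun b _ => hf0 b) b

/-- A term `k = -n` does no harm: it is `r (-2n) / 0 = 0`. -/
lemma sum_div_abs_add_le (r : ℤ → ℝ) (hr : Summable fun m => r m ^ 2) {n : ℕ} (hn : 0 < n)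
    {t : Finset ℤ} (ht : ∀ k ∈ t, k % 2 = n % 2) :
    ∑ k ∈ t, r (k - n) / |(n : ℝ) + k| ≤
      √(∑' m, r m ^ 2) / √n + √(∑' m : {m : ℤ // (n : ℤ) ≤ |m|}, r m ^ 2) := by
  have cauchySchwarz : ∀ u : Finset ℤ, ∑ k ∈ u, r (k - n) / |(n : ℝ) + k| ≤
      √(∑ k ∈ u, r (k - n) ^ 2) * √(∑ k ∈ u, (((n : ℝ) + k) ^ 2)⁻¹) := fun u => by
    simpa only [div_eq_mul_inv, inv_pow, sq_abs] using
      Real.sum_mul_le_sqrt_mul_sqrt u (fun k => r (k - n)) fun k => |(n : ℝ) + k|⁻¹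
  have hshift : ∀ u : Finset ℤ, Set.InjOn (fun k => k - (n : ℤ)) u :=
    fun u => (sub_left_injective (b := (n : ℤ))).injOn
  rw [← sum_filter_add_sum_filter_not t (0 < ·)]
  gcongr ?_ + ?_
  · calc _ ≤ _ := cauchySchwarz _
      _ ≤ √(∑' m, r m ^ 2) * √(n : ℝ)⁻¹ := by
          gcongr
          · rw [← tsum_univ]
            exact sum_comp_le_tsum_subtype hr (fun _ => sq_nonneg _) (hshift _) fun _ _ => trivial
          · exact sum_inv_sq_add_le_inv hn fun k hk => by
              simp only [mem_filter] at hk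
              exact ⟨hk.2, ht k hk.1⟩
      _ = √(∑' m, r m ^ 2) / √n := by rw [Real.sqrt_inv, div_eq_mul_inv]
  · calc _ ≤ _ := cauchySchwarz _
      _ ≤ √(∑' m : {m : ℤ // (n : ℤ) ≤ |m|}, r m ^ 2) * √1 := by
          gcongr
          · exact sum_comp_le_tsum_subtype (s := {m | (n : ℤ) ≤ |m|}) hr (fun _ => sq_nonneg _)
              (hshift _) fun k hk => by
                simp only [mem_filter] at hk
                show (n : ℤ) ≤ |k - n|
                rw [abs_of_nonpos (by omega)]
                omega
          · exact sum_inv_sq_add_le_one fun k hk => ht k (mem_filter.1 hk).1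
      _ = _ := by rw [Real.sqrt_one, mul_one]

lemma abs_sub_mul_div_abs_sq_sub_sq {x y : ℝ} (hxy : x ≠ y) (a : ℝ) :
    |(y - x) * a| / |x ^ 2 - y ^ 2| = |a| / |x + y| := by
  rw [show x ^ 2 - y ^ 2 = (x - y) * (x + y) by ring, abs_mul, abs_mul, abs_sub_comm,
    mul_div_mul_left _ _ (abs_ne_zero.2 (sub_ne_zero.2 hxy))]

lemma Summable.max_abs_comp_neg_sq {w : ℤ → ℝ} (hw : Summable fun m => w m ^ 2) :
    Summable fun m => max |w m| |w (-m)| ^ 2 :=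
  (hw.add (hw.comp_injective neg_injective)).of_nonneg_of_le (fun _ => sq_nonneg _) fun m => by
    rcases le_total |w m| |w (-m)| with h | h <;>
      simp only [h, max_eq_left, max_eq_right, sq_abs, Function.comp_apply] <;> nlinarith

/-- With `V(m) = m·w(m)` and `r(m) = max(|w(m)|,|w(-m)|)`, for `n ≥ 4`,
`∑_{k ∈ (n+2ℤ), k ≠ ±n} |V(k-n)|/|n² - k²| ≤ ‖r‖/√n + E_n(r)`. -/
theorem stmt10 (w : ℤ → ℝ) (hw : Summable fun m => (w m) ^ 2) (n : ℕ) (hn : 4 ≤ n) :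
    ∑' k : {k : ℤ // k % 2 = (n : ℤ) % 2 ∧ k ≠ (n : ℤ) ∧ k ≠ -(n : ℤ)},
        |((k.1 - (n : ℤ) : ℤ) : ℝ) * w (k.1 - (n : ℤ))| / |(n : ℝ) ^ 2 - (k.1 : ℝ) ^ 2| ≤
      Real.sqrt (∑' m : ℤ, (max |w m| |w (-m)|) ^ 2) / Real.sqrt n +
        Real.sqrt (∑' m : {m : ℤ // (n : ℤ) ≤ |m|}, (max |w m.1| |w (-m.1)|) ^ 2) := by
  set r : ℤ → ℝ := fun m => max |w m| |w (-m)|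
  refine tsum_le_of_sum_le' (by positivity) fun s => ?_
  calc _ ≤ ∑ k ∈ s, r (k - n) / |(n : ℝ) + k| := sum_le_sum fun k _ => by
        rw [Int.cast_sub, Int.cast_natCast,
          abs_sub_mul_div_abs_sq_sub_sq (by exact_mod_cast k.2.2.1.symm)]
        gcongr
        exact le_max_left _ _
    _ = ∑ k ∈ s.map (Function.Embedding.subtype _), r (k - n) / |(n : ℝ) + k| := by
        rw [sum_map]; rfl
    _ ≤ _ := sum_div_abs_add_le r hw.max_abs_comp_neg_sq (by omega) fun k hk => by
        obtain ⟨k, -, rfl⟩ := mem_map.1 hk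
        exact k.2.1
end

section
/- Let H, N ≥ 2 with H = N². Consider the function α(λ) = ∑_{k ∈ ℤ} 1/|λ - k²| on the boundary of the rectangle Π = {z ∈ ℂ : -H ≤ Re z ≤ N² + N, |Im z| ≤ H}. If there is an absolute constant C₁ such that ∑_k 1/(|n² - k²| + b) ≤ C₁ (log b)/√b for all n ∈ ℕ and b ≥ 2, then the contour integral ∫_{∂Π} α(λ) |dλ| is at most C·N log N for some absolute constant C. -/
/-!
On each side of the rectangle one compares `|λ - k²|` with `|n² - k²| + b` for a well-chosen
integer `n` and shift `b`, so that the hypothesis bounds `α(λ)` by a multiple of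
`C₁ (log b) / √b`. On the left side and on the horizontal sides `b = H = N²` works (with
`n = 0`, resp. `n²` the largest square below `Re λ`), giving the pointwise bound `C₁ log N / N`
over a length `O(N²)`. On the right side `n = N` and `b = N + |Im λ|`, because no square lies
strictly between `N²` and `(N + 1)²`; integrating `1 / √(N + |y|)` over `|y| ≤ N²` gives `O(N)`.
-/

/-- `α(λ) = ∑_{k ∈ ℤ} 1/|λ - k²|`. -/
noncomputable def alpha16 (lam : ℂ) : ℝ := ∑' k : ℤ, 1 / ‖lam - (k : ℂ) ^ 2‖

open MeasureTheory Real

lemma summable_one_div_abs_sub_sq_add (A : ℝ) {b : ℝ} (hb : 0 < b) :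
    Summable fun k : ℤ => 1 / (|A - (k : ℝ) ^ 2| + b) := by
  refine Summable.of_norm_bounded_eventually
    (g := fun k : ℤ => (1 + |A| / b) * (1 / (k : ℝ) ^ 2))
    ((summable_one_div_int_pow.2 one_lt_two).mul_left _) ?_
  filter_upwards [Filter.eventually_cofinite_ne 0] with k hk
  have hk' : (k : ℝ) ≠ 0 := by exact_mod_cast hk
  have hX : 0 ≤ |A| / b * |A - (k : ℝ) ^ 2| := by positivity
  rw [Real.norm_of_nonneg (by positivity), mul_one_div,
    div_le_div_iff₀ (by positivity) (by positivity), one_mul]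
  calc (k : ℝ) ^ 2 ≤ |A - (k : ℝ) ^ 2| + |A| := by
        linarith [abs_sub_comm A ((k : ℝ) ^ 2), le_abs_self ((k : ℝ) ^ 2 - A), le_abs_self A]
    _ ≤ (1 + |A| / b) * (|A - (k : ℝ) ^ 2| + b) := by
        have : (1 + |A| / b) * (|A - (k : ℝ) ^ 2| + b)
            = |A - (k : ℝ) ^ 2| + |A| + (b + |A| / b * |A - (k : ℝ) ^ 2|) := by
          field_simp; ring
        rw [this]; linarith

lemma abs_re_add_abs_im_le_two_mul_norm (z : ℂ) : |z.re| + |z.im| ≤ 2 * ‖z‖ := by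
  linarith [Complex.abs_re_le_norm z, Complex.abs_im_le_norm z]

lemma alpha16_le_two_mul_tsum {lam : ℂ} {n : ℕ} {b c : ℝ} (hb : 0 < b) (hc : 0 ≤ c)
    (h : ∀ k : ℤ,
      |(n : ℝ) ^ 2 - (k : ℝ) ^ 2| + b ≤ c * (|lam.re - (k : ℝ) ^ 2| + |lam.im|)) :
    alpha16 lam ≤ 2 * c * ∑' k : ℤ, 1 / (|(n : ℝ) ^ 2 - (k : ℝ) ^ 2| + b) := by
  have hg := (summable_one_div_abs_sub_sq_add ((n : ℝ) ^ 2) hb).mul_left (2 * c)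
  have hterm : ∀ k : ℤ, 1 / ‖lam - (k : ℂ) ^ 2‖
      ≤ 2 * c * (1 / (|(n : ℝ) ^ 2 - (k : ℝ) ^ 2| + b)) := by
    intro k
    have hz : lam - (k : ℂ) ^ 2 = lam - (((k : ℝ) ^ 2 : ℝ) : ℂ) := by push_cast; rfl
    have hnorm := abs_re_add_abs_im_le_two_mul_norm (lam - (k : ℂ) ^ 2)
    rw [hz, Complex.sub_re, Complex.sub_im, Complex.ofReal_re, Complex.ofReal_im, sub_zero,
      ← hz] at hnorm
    have hdom := (h k).trans (mul_le_mul_of_nonneg_left hnorm hc)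
    have hpos : 0 < ‖lam - (k : ℂ) ^ 2‖ := by
      nlinarith [abs_nonneg ((n : ℝ) ^ 2 - (k : ℝ) ^ 2)]
    rw [mul_one_div, div_le_div_iff₀ hpos (by positivity), one_mul]
    linarith
  calc alpha16 lam ≤ ∑' k : ℤ, 2 * c * (1 / (|(n : ℝ) ^ 2 - (k : ℝ) ^ 2| + b)) :=
        (hg.of_nonneg_of_le (fun _ => by positivity) hterm).tsum_le_tsum hterm hg
    _ = 2 * c * ∑' k : ℤ, 1 / (|(n : ℝ) ^ 2 - (k : ℝ) ^ 2| + b) := tsum_mul_left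

lemma exists_nat_sq_le_lt_succ_sq {x : ℝ} (hx : 0 ≤ x) :
    ∃ n : ℕ, (n : ℝ) ^ 2 ≤ x ∧ x < ((n : ℝ) + 1) ^ 2 := by
  refine ⟨⌊√x⌋₊, ?_, ?_⟩
  · calc (⌊√x⌋₊ : ℝ) ^ 2 ≤ √x ^ 2 := by gcongr; exact Nat.floor_le (sqrt_nonneg x)
      _ = x := sq_sqrt hx
  · exact (sqrt_lt' (by positivity)).1 (Nat.lt_floor_add_one _)

lemma abs_sq_sub_sq_add_le (N : ℕ) (k : ℤ) :
    |(N : ℝ) ^ 2 - (k : ℝ) ^ 2| + N ≤ 3 * |(N : ℝ) ^ 2 + N - (k : ℝ) ^ 2| := by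
  have hk : k ^ 2 ≤ (N : ℤ) ^ 2 ∨ ((N : ℤ) + 1) ^ 2 ≤ k ^ 2 := by
    rw [← sq_abs k]
    rcases le_or_gt |k| N with h | h
    · exact .inl (pow_le_pow_left₀ (abs_nonneg k) h 2)
    · exact .inr (pow_le_pow_left₀ (by positivity) h 2)
  have hN : (0 : ℝ) ≤ N := N.cast_nonneg
  rcases hk with hk | hk
  · have hk' : (k : ℝ) ^ 2 ≤ (N : ℝ) ^ 2 := by exact_mod_cast hk
    rw [abs_of_nonneg (sub_nonneg.2 hk'), abs_of_nonneg (by linarith)]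
    linarith
  · have hk' : ((N : ℝ) + 1) ^ 2 ≤ (k : ℝ) ^ 2 := by exact_mod_cast hk
    rw [abs_of_nonpos (by nlinarith), abs_of_nonpos (by nlinarith)]
    nlinarith

lemma intervalIntegral_mono_on_of_nonneg {f g : ℝ → ℝ} {a b : ℝ} (hab : a ≤ b)
    (hf : ∀ x ∈ Set.Icc a b, 0 ≤ f x) (hg : IntervalIntegrable g volume a b)
    (h : ∀ x ∈ Set.Icc a b, f x ≤ g x) : ∫ x in a..b, f x ≤ ∫ x in a..b, g x := by
  by_cases hfi : IntervalIntegrable f volume a b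
  · exact intervalIntegral.integral_mono_on hab hfi hg h
  · rw [intervalIntegral.integral_undef hfi]
    exact intervalIntegral.integral_nonneg hab fun x hx => (hf x hx).trans (h x hx)

lemma intervalIntegral_le_mul_of_le {f : ℝ → ℝ} {a b M : ℝ} (hab : a ≤ b)
    (hf : ∀ x ∈ Set.Icc a b, 0 ≤ f x) (h : ∀ x ∈ Set.Icc a b, f x ≤ M) :
    ∫ x in a..b, f x ≤ (b - a) * M := by
  simpa using intervalIntegral_mono_on_of_nonneg hab hf intervalIntegrable_const h

lemma integral_one_div_sqrt_add (a H : ℝ) (ha : 0 < a) (hH : 0 ≤ H) :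
    ∫ y in (0 : ℝ)..H, 1 / √(a + y) = 2 * (√(a + H) - √a) := by
  have hpos : ∀ y ∈ Set.uIcc 0 H, 0 < a + y := fun y hy => by
    rw [Set.uIcc_of_le hH] at hy; linarith [hy.1]
  have hderiv :
      ∀ y ∈ Set.uIcc 0 H, HasDerivAt (fun t => 2 * √(a + t)) (1 / √(a + y)) y := by
    intro y hy
    have := (((hasDerivAt_id y).const_add a).sqrt (hpos y hy).ne').const_mul 2
    refine this.congr_deriv ?_
    have := (sqrt_pos.2 (hpos y hy)).ne'
    simp only [id]
    field_simp
  have hcont : ContinuousOn (fun y => 1 / √(a + y)) (Set.uIcc 0 H) :=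
    continuousOn_const.div (by fun_prop) fun y hy => (sqrt_pos.2 (hpos y hy)).ne'
  rw [intervalIntegral.integral_eq_sub_of_hasDerivAt hderiv hcont.intervalIntegrable]
  simp only [add_zero]; ring

lemma integral_one_div_sqrt_add_abs (a H : ℝ) (ha : 0 < a) (hH : 0 ≤ H) :
    ∫ y in -H..H, 1 / √(a + |y|) = 4 * (√(a + H) - √a) := by
  have hcont : Continuous fun y : ℝ => 1 / √(a + |y|) :=
    continuous_const.div (by fun_prop) fun y => (sqrt_pos.2 (by positivity)).ne'
  have hright : ∫ y in (0 : ℝ)..H, 1 / √(a + |y|) = 2 * (√(a + H) - √a) := by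
    rw [← integral_one_div_sqrt_add a H ha hH]
    refine intervalIntegral.integral_congr fun y hy => ?_
    rw [Set.uIcc_of_le hH] at hy
    simp only [abs_of_nonneg hy.1]
  have hleft : ∫ y in -H..0, 1 / √(a + |y|) = 2 * (√(a + H) - √a) := by
    have := intervalIntegral.integral_comp_neg (a := 0) (b := H) fun y => 1 / √(a + |y|)
    simp only [abs_neg, neg_zero] at this
    rw [← this, hright]
  rw [← intervalIntegral.integral_add_adjacent_intervals (hcont.intervalIntegrable _ _)
    (hcont.intervalIntegrable _ _), hleft, hright]
  ring

lemma alpha16_nonneg (lam : ℂ) : 0 ≤ alpha16 lam :=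
  tsum_nonneg fun _ => by positivity

def SquareGapSumBound (C₁ : ℝ) : Prop :=
  ∀ (n : ℕ) (b : ℝ), 2 ≤ b →
    (∑' k : ℤ, 1 / (|(n : ℝ) ^ 2 - (k : ℝ) ^ 2| + b)) ≤ C₁ * Real.log b / Real.sqrt b

namespace SquareGapSumBound

variable {C₁ : ℝ}

lemma nonneg (hC₁ : SquareGapSumBound C₁) : 0 ≤ C₁ := by
  have h := (tsum_nonneg fun k : ℤ => by positivity :
    0 ≤ ∑' k : ℤ, 1 / (|((0 : ℕ) : ℝ) ^ 2 - (k : ℝ) ^ 2| + 2)).trans (hC₁ 0 2 le_rfl)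
  rw [mul_div_assoc] at h
  exact nonneg_of_mul_nonneg_left h (by positivity)

lemma alpha16_le (hC₁ : SquareGapSumBound C₁) {lam : ℂ} {n : ℕ} {b c : ℝ} (hb : 2 ≤ b)
    (hc : 0 ≤ c)
    (h : ∀ k : ℤ,
      |(n : ℝ) ^ 2 - (k : ℝ) ^ 2| + b ≤ c * (|lam.re - (k : ℝ) ^ 2| + |lam.im|)) :
    alpha16 lam ≤ 2 * c * (C₁ * log b / √b) :=
  (alpha16_le_two_mul_tsum (by linarith) hc h).trans
    (mul_le_mul_of_nonneg_left (hC₁ n b hb) (by positivity))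

lemma alpha16_le_of_le_abs_im_sub_re (hC₁ : SquareGapSumBound C₁) {lam : ℂ} {b : ℝ}
    (hb : 2 ≤ b) (h : b ≤ |lam.im| - lam.re) : alpha16 lam ≤ 2 * (C₁ * log b / √b) := by
  simpa using hC₁.alpha16_le (lam := lam) (n := 0) (c := 1) hb zero_le_one fun k => by
    rw [Nat.cast_zero, zero_pow two_ne_zero, zero_sub, abs_neg, abs_sq, one_mul]
    linarith [neg_abs_le (lam.re - (k : ℝ) ^ 2)]

lemma alpha16_le_of_re_le (hC₁ : SquareGapSumBound C₁) {lam : ℂ} {b : ℝ} (hb : 4 ≤ b)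
    (hre : lam.re ≤ b + √b) (him : b ≤ |lam.im|) :
    alpha16 lam ≤ 6 * (C₁ * log b / √b) := by
  rcases le_or_gt lam.re 0 with hre0 | hre0
  · have := hC₁.nonneg
    have := log_nonneg (by linarith : 1 ≤ b)
    have : 0 ≤ C₁ * log b / √b := by positivity
    linarith [hC₁.alpha16_le_of_le_abs_im_sub_re (by linarith)
      (by linarith : b ≤ |lam.im| - lam.re)]
  obtain ⟨n, hn, hn'⟩ := exists_nat_sq_le_lt_succ_sq hre0.le
  have hs : 2 ≤ √b := (le_sqrt zero_le_two (by linarith)).2 (by linarith)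
  have hsb : √b ^ 2 = b := sq_sqrt (by linarith)
  have hns : (n : ℝ) < √b + 1 := by nlinarith
  have hgap : |(n : ℝ) ^ 2 - lam.re| ≤ 2 * b := by
    rw [abs_sub_comm, abs_of_nonneg (by linarith)]
    nlinarith
  have := hC₁.alpha16_le (lam := lam) (n := n) (b := b) (c := 3) (by linarith) (by norm_num)
    fun k => by
      linarith [abs_sub_le ((n : ℝ) ^ 2) lam.re ((k : ℝ) ^ 2),
        abs_nonneg (lam.re - (k : ℝ) ^ 2)]
  linarith

lemma alpha16_le_of_re_eq (hC₁ : SquareGapSumBound C₁) {lam : ℂ} {N : ℕ} (hN : 2 ≤ N)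
    (hre : lam.re = (N : ℝ) ^ 2 + N) :
    alpha16 lam ≤ 6 * (C₁ * log (N + |lam.im|) / √(N + |lam.im|)) := by
  have hN' : (2 : ℝ) ≤ N := by exact_mod_cast hN
  have := hC₁.alpha16_le (lam := lam) (n := N) (b := N + |lam.im|) (c := 3)
    (by linarith [abs_nonneg lam.im]) (by norm_num) fun k => by
      rw [hre]; linarith [abs_sq_sub_sq_add_le N k, abs_nonneg lam.im]
  linarith

lemma integral_left_le (hC₁ : SquareGapSumBound C₁) {N : ℕ} (hN : 2 ≤ N) {f : ℝ → ℂ}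
    (hre : ∀ y, (f y).re = -(N : ℝ) ^ 2) :
    ∫ y in (-(N : ℝ) ^ 2)..((N : ℝ) ^ 2), alpha16 (f y) ≤ 8 * C₁ * N * log N := by
  have hN' : (2 : ℝ) ≤ N := by exact_mod_cast hN
  calc _ ≤ ((N : ℝ) ^ 2 - -(N : ℝ) ^ 2)
        * (2 * (C₁ * log ((N : ℝ) ^ 2) / √((N : ℝ) ^ 2))) :=
        intervalIntegral_le_mul_of_le (by nlinarith) (fun _ _ => alpha16_nonneg _) fun y _ =>
          hC₁.alpha16_le_of_le_abs_im_sub_re (by nlinarith)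
            (by rw [hre]; linarith [abs_nonneg (f y).im])
    _ = 8 * C₁ * N * log N := by
        rw [log_pow, sqrt_sq (by positivity)]
        field_simp
        ring

lemma integral_horizontal_le (hC₁ : SquareGapSumBound C₁) {N : ℕ} (hN : 2 ≤ N)
    {f : ℝ → ℂ}
    (hre : ∀ x, (f x).re = x) (him : ∀ x, |(f x).im| = (N : ℝ) ^ 2) :
    ∫ x in (-(N : ℝ) ^ 2)..((N : ℝ) ^ 2 + N), alpha16 (f x) ≤ 30 * C₁ * N * log N := by
  have hN' : (2 : ℝ) ≤ N := by exact_mod_cast hN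
  have hlog : 0 ≤ C₁ * log N := mul_nonneg hC₁.nonneg (log_nonneg (by linarith))
  calc _ ≤ ((N : ℝ) ^ 2 + N - -(N : ℝ) ^ 2)
        * (6 * (C₁ * log ((N : ℝ) ^ 2) / √((N : ℝ) ^ 2))) :=
        intervalIntegral_le_mul_of_le (by nlinarith) (fun _ _ => alpha16_nonneg _) fun x hx =>
          hC₁.alpha16_le_of_re_le (by nlinarith)
            (by rw [hre, sqrt_sq (by positivity)]; exact hx.2) (him x).ge
    _ = 12 * (2 * N + 1) * (C₁ * log N) := by
        rw [log_pow, sqrt_sq (by positivity)]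
        field_simp
        ring
    _ ≤ 30 * C₁ * N * log N := by nlinarith

lemma integral_right_le (hC₁ : SquareGapSumBound C₁) {N : ℕ} (hN : 2 ≤ N) {f : ℝ → ℂ}
    (hre : ∀ y, (f y).re = (N : ℝ) ^ 2 + N) (him : ∀ y, (f y).im = y) :
    ∫ y in (-(N : ℝ) ^ 2)..((N : ℝ) ^ 2), alpha16 (f y) ≤ 108 * C₁ * N * log N := by
  have hN' : (2 : ℝ) ≤ N := by exact_mod_cast hN
  have hC₁0 := hC₁.nonneg
  have hlog : log (2 * (N : ℝ) ^ 2) ≤ 3 * log N := by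
    rw [log_mul two_ne_zero (by positivity), log_pow]
    push_cast
    linarith [log_le_log two_pos hN']
  have hsqrt : √(N + (N : ℝ) ^ 2) ≤ N + 1 := sqrt_le_iff.2 ⟨by positivity, by nlinarith⟩
  have hpoint : ∀ y ∈ Set.Icc (-(N : ℝ) ^ 2) ((N : ℝ) ^ 2),
      alpha16 (f y) ≤ 6 * (C₁ * log (2 * (N : ℝ) ^ 2)) * (1 / √(N + |y|)) := fun y hy => by
    calc alpha16 (f y) ≤ 6 * (C₁ * log (N + |y|) / √(N + |y|)) := by
          simpa [him] using hC₁.alpha16_le_of_re_eq hN (hre y)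
      _ ≤ 6 * (C₁ * log (2 * (N : ℝ) ^ 2)) * (1 / √(N + |y|)) := by
          rw [mul_one_div, mul_div_assoc']
          gcongr
          nlinarith [abs_le.2 hy]
  calc _ ≤ ∫ y in (-(N : ℝ) ^ 2)..((N : ℝ) ^ 2),
        6 * (C₁ * log (2 * (N : ℝ) ^ 2)) * (1 / √(N + |y|)) :=
        intervalIntegral_mono_on_of_nonneg (by nlinarith) (fun _ _ => alpha16_nonneg _)
          (Continuous.intervalIntegrable (continuous_const.mul (continuous_const.div
            (by fun_prop) fun y => (sqrt_pos.2 (by positivity)).ne')) _ _) hpoint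
    _ = 6 * (C₁ * log (2 * (N : ℝ) ^ 2)) * (4 * (√(N + (N : ℝ) ^ 2) - √N)) := by
        rw [intervalIntegral.integral_const_mul,
          integral_one_div_sqrt_add_abs _ _ (by positivity) (by positivity)]
    _ ≤ 6 * (C₁ * (3 * log N)) * (4 * (N + 1)) := by
        have : 0 ≤ log (2 * (N : ℝ) ^ 2) := log_nonneg (by nlinarith)
        gcongr <;>
          linarith [sqrt_nonneg (N : ℝ), sqrt_le_sqrt (by nlinarith : (N : ℝ) ≤ N + N ^ 2)]
    _ ≤ 108 * C₁ * N * log N := by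
        have := mul_nonneg hC₁0 (log_nonneg (by linarith : (1 : ℝ) ≤ N))
        nlinarith

end SquareGapSumBound

/-- If `∑_k 1/(|n²-k²|+b) ≤ C₁ (log b)/√b` for all `n ∈ ℕ`, `b ≥ 2`, then the integral of
`α` over the boundary of the rectangle `Π = {-H ≤ Re z ≤ N²+N, |Im z| ≤ H}` with `H = N²`
is at most `C·N·log N` for an absolute constant `C`. -/
theorem stmt16 (C₁ : ℝ)
    (hC₁ : ∀ (n : ℕ) (b : ℝ), 2 ≤ b →
      (∑' k : ℤ, 1 / (|(n : ℝ) ^ 2 - (k : ℝ) ^ 2| + b)) ≤ C₁ * Real.log b / Real.sqrt b) :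
    ∃ C : ℝ, ∀ N : ℕ, 2 ≤ N →
      (∫ y in (-(N : ℝ) ^ 2)..((N : ℝ) ^ 2),
          alpha16 ((-(N : ℝ) ^ 2 : ℂ) + y * Complex.I)) +
      (∫ x in (-(N : ℝ) ^ 2)..((N : ℝ) ^ 2 + N),
          alpha16 ((x : ℂ) + ((N : ℝ) ^ 2 : ℝ) * Complex.I)) +
      (∫ x in (-(N : ℝ) ^ 2)..((N : ℝ) ^ 2 + N),
          alpha16 ((x : ℂ) - ((N : ℝ) ^ 2 : ℝ) * Complex.I)) +
      (∫ y in (-(N : ℝ) ^ 2)..((N : ℝ) ^ 2),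
          alpha16 (((N : ℝ) ^ 2 + N : ℝ) + y * Complex.I)) ≤
      C * N * Real.log N := by
  have hC : SquareGapSumBound C₁ := hC₁
  refine ⟨176 * C₁, fun N hN => ?_⟩
  have hleft := hC.integral_left_le hN
    (f := fun y => (-(N : ℝ) ^ 2 : ℂ) + y * Complex.I) (by simp [sq])
  have htop := hC.integral_horizontal_le hN
    (f := fun x => (x : ℂ) + ((N : ℝ) ^ 2 : ℝ) * Complex.I) (by simp [sq]) (by simp [sq])
  have hbottom := hC.integral_horizontal_le hN
    (f := fun x => (x : ℂ) - ((N : ℝ) ^ 2 : ℝ) * Complex.I) (by simp [sq]) (by simp [sq])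
  have hright := hC.integral_right_le hN
    (f := fun y => (((N : ℝ) ^ 2 + N : ℝ) : ℂ) + y * Complex.I) (by simp [sq]) (by simp [sq])
  linarith
end
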